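/- On the reference tetrahedron K³, for each face f_{j1} = [j2,j3,j4] and each edge [k1,k2] of that face (k1 < k2, with k3 the remaining vertex of the face), all the second-kind edge-based face functions — Φ̃^0 = λ_{k1} ∇λ_{k2} × ∇λ_{k3}, Φ̃^1 = λ_{k1} λ_{k2} ∇λ_{k3} × ∇λ_{k1}, and Φ̃^{i+1} = ℓ_i(γ) Φ̃^1 + ℓ_{i−1}(γ) Φ̃^0 for i ≥ 1, where γ = λ_{k2} − λ_{k1} — have vanishing normal component on every face other than f_{j1}: for every jk ≠ j1, n^{f_{jk}} · Φ̃^{m} = 0 at every point of the face f_{jk}, for all m ≥ 0. -/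

import Mathlib

open MeasureTheory
open scoped BigOperators

noncomputable section

/-- Vertices of the reference tetrahedron:
`v0 = (0,0,0)`, `v1 = (1,0,0)`, `v2 = (0,1,0)`, `v3 = (0,0,1)`. -/
def vtx : Fin 4 → Fin 3 → ℝ := ![![0,0,0], ![1,0,0], ![0,1,0], ![0,0,1]]

/-- Barycentric coordinates `λ0 = 1−ξ−η−ζ`, `λ1 = ξ`, `λ2 = η`, `λ3 = ζ`. -/
def lam : Fin 4 → (Fin 3 → ℝ) → ℝ :=
  ![fun p => 1 - p 0 - p 1 - p 2, fun p => p 0, fun p => p 1, fun p => p 2]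

/-- The (constant) gradients `∇λ_i`. -/
def gradLam : Fin 4 → Fin 3 → ℝ := ![![-1,-1,-1], ![1,0,0], ![0,1,0], ![0,0,1]]

/-- The reference tetrahedron `K³ = {(ξ,η,ζ) : ξ,η,ζ ≥ 0, ξ+η+ζ ≤ 1}`. -/
def K3 : Set (Fin 3 → ℝ) := {p | 0 ≤ p 0 ∧ 0 ≤ p 1 ∧ 0 ≤ p 2 ∧ p 0 + p 1 + p 2 ≤ 1}

/-- Cross product in ℝ³. -/
def cross3 (u v : Fin 3 → ℝ) : Fin 3 → ℝ :=
  ![u 1 * v 2 - u 2 * v 1, u 2 * v 0 - u 0 * v 2, u 0 * v 1 - u 1 * v 0]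

/-- Euclidean norm in ℝ³. -/
def norm3 (u : Fin 3 → ℝ) : ℝ := Real.sqrt (∑ i, u i ^ 2)

/-- Euclidean dot product in ℝ³. -/
def dot3 (u v : Fin 3 → ℝ) : ℝ := ∑ i, u i * v i

/-- The unit vector in the direction of `u`. -/
def unitV (u : Fin 3 → ℝ) : Fin 3 → ℝ := (norm3 u)⁻¹ • u

/-- The outward unit normal of the face `f_j` of `K³` opposite the vertex
`v_j` (that face lies in the plane `λ_j = 0`): `n^{f_j} = −∇λ_j / |∇λ_j|`. -/
def nFace (j : Fin 4) : Fin 3 → ℝ := (norm3 (gradLam j))⁻¹ • (-(gradLam j))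

/-- The classical (un-normalized) Jacobi polynomial `P_n^{(a,b)}` in homogenized
(cleared-denominator) form: `jacobiHom n a b u w = w^n P_n^{(a,b)}(u/w)` for
`w ≠ 0`, via the explicit sum
`P_n^{(a,b)}(x) = ∑_{s} C(n+a, n−s) C(n+b, s) ((x−1)/2)^s ((x+1)/2)^{n−s}`. -/
def jacobiHom (n a b : ℕ) (u w : ℝ) : ℝ :=
  ∑ k ∈ Finset.range (n+1),
    (((n+a).choose (n-k) : ℝ)) * (((n+b).choose k : ℝ)) *
      ((u - w)/2)^k * ((u + w)/2)^(n-k)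

/-- The degree-`n` Legendre polynomial `ℓ_n` (normalized so `ℓ_n(1) = 1`). -/
def legendre (n : ℕ) (x : ℝ) : ℝ := jacobiHom n 0 0 x 1

/-- `Φ̃^0 = λ_{k1} ∇λ_{k2} × ∇λ_{k3}`. -/
def PhiSK0 (k1 k2 k3 : Fin 4) (p : Fin 3 → ℝ) : Fin 3 → ℝ :=
  lam k1 p • cross3 (gradLam k2) (gradLam k3)

/-- `Φ̃^1 = λ_{k1} λ_{k2} ∇λ_{k3} × ∇λ_{k1}`. -/
def PhiSK1 (k1 k2 k3 : Fin 4) (p : Fin 3 → ℝ) : Fin 3 → ℝ :=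
  (lam k1 p * lam k2 p) • cross3 (gradLam k3) (gradLam k1)

/-- The second-kind edge-based face functions: `Φ̃^0`, `Φ̃^1`, and for `i ≥ 1`
`Φ̃^{i+1} = ℓ_i(γ) Φ̃^1 + ℓ_{i−1}(γ) Φ̃^0` where `γ = λ_{k2} − λ_{k1}`. -/
def PhiSK (k1 k2 k3 : Fin 4) : ℕ → (Fin 3 → ℝ) → Fin 3 → ℝ
  | 0 => PhiSK0 k1 k2 k3
  | 1 => PhiSK1 k1 k2 k3
  | (i+2) => fun p =>
      legendre (i+1) (lam k2 p - lam k1 p) • PhiSK1 k1 k2 k3 p +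
      legendre i (lam k2 p - lam k1 p) • PhiSK0 k1 k2 k3 p

/-!
The faces `f_{jk}` with `jk ≠ j1` are exactly the faces `λ_{k1} = 0`, `λ_{k2} = 0`, `λ_{k3} = 0`,
and the normal of the face `λ_j = 0` is parallel to `∇λ_j`. The factor `λ_{k1}` kills `Φ̃^0` on
`λ_{k1} = 0`, and `∇λ_{k2} × ∇λ_{k3}` is orthogonal to `∇λ_{k2}` and `∇λ_{k3}`; likewise
`λ_{k1} λ_{k2}` kills `Φ̃^1` on the first two faces and `∇λ_{k3} × ∇λ_{k1}` is orthogonal to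
`∇λ_{k3}`. Every higher `Φ̃^m` is, pointwise, a linear combination of `Φ̃^0` and `Φ̃^1`.
-/

open Matrix

lemma dot3_eq_dotProduct (u v : Fin 3 → ℝ) : dot3 u v = u ⬝ᵥ v := rfl

lemma cross3_eq_crossProduct (u v : Fin 3 → ℝ) : cross3 u v = u ⨯₃ v := rfl

lemma dot3_nFace_eq_zero {j : Fin 4} {v : Fin 3 → ℝ} (h : dot3 (gradLam j) v = 0) :
    dot3 (nFace j) v = 0 := by
  rw [dot3_eq_dotProduct] at h ⊢
  rw [nFace, smul_dotProduct, neg_dotProduct, h, neg_zero, smul_zero]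

lemma dot3_PhiSK_eq_zero {k1 k2 k3 : Fin 4} {g p : Fin 3 → ℝ}
    (h0 : dot3 g (PhiSK0 k1 k2 k3 p) = 0) (h1 : dot3 g (PhiSK1 k1 k2 k3 p) = 0) :
    ∀ m, dot3 g (PhiSK k1 k2 k3 m p) = 0
  | 0 => h0
  | 1 => h1
  | _ + 2 => by
    rw [dot3_eq_dotProduct] at h0 h1 ⊢
    simp only [PhiSK, dotProduct_add, dotProduct_smul, h0, h1, smul_zero, add_zero]

lemma dot3_gradLam_PhiSK0_eq_zero {j k1 k2 k3 : Fin 4} {p : Fin 3 → ℝ}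
    (hj : j = k1 ∨ j = k2 ∨ j = k3) (hp : lam j p = 0) :
    dot3 (gradLam j) (PhiSK0 k1 k2 k3 p) = 0 := by
  rw [dot3_eq_dotProduct, PhiSK0, cross3_eq_crossProduct, dotProduct_smul]
  rcases hj with rfl | rfl | rfl
  · rw [hp, zero_smul]
  · rw [dot_self_cross, smul_zero]
  · rw [dot_cross_self, smul_zero]

lemma dot3_gradLam_PhiSK1_eq_zero {j k1 k2 k3 : Fin 4} {p : Fin 3 → ℝ}
    (hj : j = k1 ∨ j = k2 ∨ j = k3) (hp : lam j p = 0) :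
    dot3 (gradLam j) (PhiSK1 k1 k2 k3 p) = 0 := by
  rw [dot3_eq_dotProduct, PhiSK1, cross3_eq_crossProduct, dotProduct_smul]
  rcases hj with rfl | rfl | rfl
  · rw [hp, zero_mul, zero_smul]
  · rw [hp, mul_zero, zero_smul]
  · rw [dot_self_cross, smul_zero]

lemma Fin.four_eq_or_eq_or_eq_of_ne {j1 k1 k2 k3 j : Fin 4} (h1 : k1 ≠ j1) (h2 : k2 ≠ j1)
    (h3 : k3 ≠ j1) (h12 : k1 ≠ k2) (h31 : k3 ≠ k1) (h32 : k3 ≠ k2) (hj : j ≠ j1) :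
    j = k1 ∨ j = k2 ∨ j = k3 := by
  omega

/-- every second-kind edge-based face function attached to the
face `f_{j1}` (with edge `[k1,k2]`, `k1 < k2`, and remaining vertex `k3`) has
vanishing normal component at every point of every face `f_{jk}` with
`jk ≠ j1`. -/
theorem stmt11 : ∀ (j1 k1 k2 k3 : Fin 4), k1 ≠ j1 → k2 ≠ j1 → k3 ≠ j1 →
    k1 < k2 → k3 ≠ k1 → k3 ≠ k2 → ∀ m : ℕ, ∀ jk : Fin 4, jk ≠ j1 →
    ∀ p ∈ K3, lam jk p = 0 → dot3 (nFace jk) (PhiSK k1 k2 k3 m p) = 0 := by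
  intro j1 k1 k2 k3 h1 h2 h3 h12 h31 h32 m jk hjk p _ hp
  have hface := Fin.four_eq_or_eq_or_eq_of_ne h1 h2 h3 h12.ne h31 h32 hjk
  exact dot3_nFace_eq_zero <| dot3_PhiSK_eq_zero
    (dot3_gradLam_PhiSK0_eq_zero hface hp) (dot3_gradLam_PhiSK1_eq_zero hface hp) m
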